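/- The group Γ₃ = ⟨s, t | s t s t² s t s = t² s t s t²⟩ contains a copy of ℤ²: the subgroup of Γ₃ generated by the two elements s t s and t² s t s t² s t s t² s t s is isomorphic to ℤ × ℤ. -/

import Mathlib

/-- The relator `s t s t² s t s (t² s t s t²)⁻¹` (i.e. the relation
`s t s t² s t s = t² s t s t²`) in the free group on generators `s = of 0`, `t = of 1`. -/
def rel3 : FreeGroup (Fin 2) :=
  (FreeGroup.of 0) * (FreeGroup.of 1) * (FreeGroup.of 0) * (FreeGroup.of 1) ^ 2 *
    (FreeGroup.of 0) * (FreeGroup.of 1) * (FreeGroup.of 0) *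
    ((FreeGroup.of 1) ^ 2 * (FreeGroup.of 0) * (FreeGroup.of 1) * (FreeGroup.of 0) *
      (FreeGroup.of 1) ^ 2)⁻¹

/-- The group `Γ₃ = ⟨s, t ∣ s t s t² s t s = t² s t s t²⟩`. -/
def Gamma3 := PresentedGroup ({rel3} : Set (FreeGroup (Fin 2)))

instance : Group Gamma3 := by unfold Gamma3; infer_instance

/-- The generator `s` of `Γ₃`. -/
def sG : Gamma3 := PresentedGroup.of 0

/-- The generator `t` of `Γ₃`. -/
def tG : Gamma3 := PresentedGroup.of 1

/-!
With `a = s t s` and `u = t²` the defining relation of `Γ₃` is the braid relation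
`a u a = u a u`, so `b = (u a)³ = (a u a)²` commutes with `a`, and `(m, n) ↦ aᵐ bⁿ` maps `ℤ²`
onto the subgroup generated by `a` and `b`. It is injective because of the representation
`s ↦ [[0, 2], [-1, 0]]`, `t ↦ [[-2, 0], [1, -2]]` of `Γ₃` in `GL₂(ℚ)`: it sends `a` to
`4 [[1, 1], [0, 1]]` and `b` to the scalar `-4096`, hence `aᵐ bⁿ` to
`4ᵐ (-4096)ⁿ [[1, m], [0, 1]]`, which is the identity only for `m = n = 0`.
-/

open Matrix Multiplicative

theorem commute_mul_pow_three_of_braid {M : Type*} [Monoid M] {a u : M}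
    (h : a * u * a = u * a * u) : Commute a ((u * a) ^ 3) := by
  have hu : SemiconjBy (a * u * a) u a := by
    rw [SemiconjBy]; conv_rhs => rw [h]
    simp only [mul_assoc]
  have ha : SemiconjBy (a * u * a) a u := by
    rw [SemiconjBy]; conv_lhs => rw [h]
    simp only [mul_assoc]
  have hcube : (u * a) ^ 3 = (a * u * a) * (a * u * a) := by
    calc (u * a) ^ 3 = (u * a * u) * (a * u * a) := by simp only [pow_three, mul_assoc]
      _ = _ := by rw [← h]
  rw [hcube]
  exact (hu.mul_left ha).symm

theorem Commute.nonempty_closure_pair_mulEquiv {G : Type*} [Group G] {a b : G} (hab : Commute a b)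
    (hind : ∀ m n : ℤ, a ^ m * b ^ n = 1 → m = 0 ∧ n = 0) :
    Nonempty (Subgroup.closure {a, b} ≃* Multiplicative ℤ × Multiplicative ℤ) := by
  let ψ := MonoidHom.noncommCoprod (zpowersHom G a) (zpowersHom G b)
    fun m n => hab.zpow_zpow m.toAdd n.toAdd
  have hψ : Function.Injective ψ := by
    refine (injective_iff_map_eq_one ψ).2 fun ⟨m, n⟩ h => ?_
    obtain ⟨hm, hn⟩ := hind m.toAdd n.toAdd h
    exact Prod.ext (toAdd_eq_zero.1 hm) (toAdd_eq_zero.1 hn)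
  have hrange : ψ.range = Subgroup.closure {a, b} := by
    calc ψ.range = Subgroup.zpowers a ⊔ Subgroup.zpowers b := MonoidHom.noncommCoprod_range _ _ _
      _ = Subgroup.closure {a, b} := by
        rw [Subgroup.zpowers_eq_closure, Subgroup.zpowers_eq_closure, ← Subgroup.closure_union,
          Set.singleton_union]
  exact ⟨((MonoidHom.ofInjective hψ).trans (MulEquiv.subgroupCongr hrange)).symm⟩

def aG : Gamma3 := sG * tG * sG

def bG : Gamma3 := tG ^ 2 * aG * tG ^ 2 * aG * tG ^ 2 * aG

theorem aG_tG_sq_braid : aG * tG ^ 2 * aG = tG ^ 2 * aG * tG ^ 2 := by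
  have h : sG * tG * sG * tG ^ 2 * sG * tG * sG = tG ^ 2 * sG * tG * sG * tG ^ 2 :=
    PresentedGroup.mk_eq_mk_of_mul_inv_mem (Set.mem_singleton rel3)
  simpa only [aG, mul_assoc] using h

theorem commute_aG_bG : Commute aG bG := by
  have hbG : bG = (tG ^ 2 * aG) ^ 3 := by simp only [bG, pow_three, mul_assoc]
  exact hbG ▸ commute_mul_pow_three_of_braid aG_tG_sq_braid

def repS : GL (Fin 2) ℚ := .mkOfDetNeZero !![0, 2; -1, 0] (by norm_num [det_fin_two])

def repT : GL (Fin 2) ℚ := .mkOfDetNeZero !![-2, 0; 1, -2] (by norm_num [det_fin_two])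

theorem repS_repT_relation :
    repS * repT * repS * repT ^ 2 * repS * repT * repS =
      repT ^ 2 * repS * repT * repS * repT ^ 2 := by
  ext : 1
  simp only [Units.val_mul, Units.val_pow_eq_pow_val, repS, repT,
    GeneralLinearGroup.val_mkOfDetNeZero]
  norm_num [pow_two, mul_fin_two]

def gamma3Rep : Gamma3 →* GL (Fin 2) ℚ :=
  PresentedGroup.toGroup (f := ![repS, repT]) fun r hr => by
    rw [Set.mem_singleton_iff.1 hr, rel3]
    simp only [map_mul, map_pow, map_inv, FreeGroup.lift_apply_of, mul_inv_eq_one,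
      cons_val_zero, cons_val_one]
    exact repS_repT_relation

theorem gamma3Rep_sG : gamma3Rep sG = repS := PresentedGroup.toGroup.of _

theorem gamma3Rep_tG : gamma3Rep tG = repT := PresentedGroup.toGroup.of _

def scaledShearHom : Multiplicative ℤ × Multiplicative ℤ →* GL (Fin 2) ℚ :=
  MonoidHom.toHomUnits
    { toFun := fun p =>
        ((4 : ℚ) ^ p.1.toAdd * (-4096) ^ p.2.toAdd) • !![1, (p.1.toAdd : ℚ); 0, 1]
      map_one' := by simp [one_fin_two]
      map_mul' := fun p q => by
        simp only [Prod.fst_mul, Prod.snd_mul, toAdd_mul, smul_mul_smul, mul_fin_two,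
          zpow_add₀ (by norm_num : (4 : ℚ) ≠ 0), zpow_add₀ (by norm_num : (-4096 : ℚ) ≠ 0)]
        congr 1
        · ring
        · push_cast; ext i j; fin_cases i <;> fin_cases j <;> simp [add_comm] }

theorem eq_one_of_scaledShearHom_eq_one {p : Multiplicative ℤ × Multiplicative ℤ}
    (h : scaledShearHom p = 1) : p = 1 := by
  obtain ⟨m, n⟩ := p
  have hentries := congrArg (fun g : GL (Fin 2) ℚ => ((g : Matrix (Fin 2) (Fin 2) ℚ) 0 0,
    (g : Matrix (Fin 2) (Fin 2) ℚ) 0 1)) h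
  have h4 : (4 : ℚ) ^ m.toAdd ≠ 0 := zpow_ne_zero _ (by norm_num)
  have h4096 : (-4096 : ℚ) ^ n.toAdd ≠ 0 := zpow_ne_zero _ (by norm_num)
  obtain ⟨hscalar, rfl⟩ : (4 : ℚ) ^ m.toAdd * (-4096) ^ n.toAdd = 1 ∧ m = 1 := by
    simpa [scaledShearHom, h4, h4096] using hentries
  have hn : (4096 : ℚ) ^ n.toAdd = 1 := by
    simpa [abs_zpow] using congrArg abs hscalar
  simpa using (zpow_eq_one_iff_right₀ (by norm_num) (by norm_num)).1 hn

theorem gamma3Rep_aG : gamma3Rep aG = scaledShearHom (ofAdd 1, 1) := by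
  ext : 1
  norm_num [aG, gamma3Rep_sG, gamma3Rep_tG, repS, repT, scaledShearHom]

theorem gamma3Rep_bG : gamma3Rep bG = scaledShearHom (1, ofAdd 1) := by
  ext : 1
  norm_num [aG, bG, gamma3Rep_sG, gamma3Rep_tG, repS, repT, scaledShearHom, pow_two]

theorem eq_zero_of_aG_zpow_mul_bG_zpow_eq_one {m n : ℤ} (h : aG ^ m * bG ^ n = 1) :
    m = 0 ∧ n = 0 := by
  have hshear : scaledShearHom (ofAdd m, ofAdd n) = 1 := by
    have hm : (ofAdd m, ofAdd n) = (ofAdd 1, 1) ^ m * (1, ofAdd 1) ^ n := by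
      simp [← ofAdd_zsmul]
    rw [hm, map_mul, map_zpow, map_zpow, ← gamma3Rep_aG, ← gamma3Rep_bG, ← map_zpow,
      ← map_zpow, ← map_mul, h, map_one]
  simpa [Prod.ext_iff] using eq_one_of_scaledShearHom_eq_one hshear

/-- `Γ₃` contains a copy of `ℤ²`: the subgroup generated by `s t s` and
`t² s t s t² s t s t² s t s` is isomorphic to `ℤ × ℤ` (written multiplicatively). -/
theorem Gamma3_contains_Z2 :
    Nonempty ((Subgroup.closure
        ({sG * tG * sG,
          tG ^ 2 * (sG * tG * sG) * tG ^ 2 * (sG * tG * sG) * tG ^ 2 * (sG * tG * sG)} :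
          Set Gamma3)) ≃* Multiplicative ℤ × Multiplicative ℤ) :=
  commute_aG_bG.nonempty_closure_pair_mulEquiv fun _ _ => eq_zero_of_aG_zpow_mul_bG_zpow_eq_one
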